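/- (Exponent-selection rule.) Let, for each n ≥ 2, scores z_{n,1},…,z_{n,n} be given with Λ_n < ∞ for all sufficiently large n, and suppose Λ_n ≍ (log n)^{ξ_Λ} and β_n ≍ (log n)^{ξ_β} for a positive deterministic sequence (β_n) and real exponents ξ_Λ, ξ_β. If ξ_β < ξ_Λ then D_n(β_n) → 0 (top-two collapse); if ξ_β > ξ_Λ then H_n(β_n) → 0 (entropy collapse). Consequently, if neither D_n(β_n) → 0 nor H_n(β_n) → 0 holds, then ξ_β = ξ_Λ. -/

import Mathlib

open Filter MeasureTheory
open scoped ENNReal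

/-- Maximum score `z_n^*`. -/
noncomputable def zmax (n : ℕ) (z : Fin n → ℝ) : ℝ := sSup (Set.range z)

/-- Gap `g_{n,j} = z_n^* - z_{n,j}`. -/
noncomputable def gap (n : ℕ) (z : Fin n → ℝ) (j : Fin n) : ℝ := zmax n z - z j

/-- Cumulative gap-counting function `N_n(t)`. -/
noncomputable def Ncount (n : ℕ) (z : Fin n → ℝ) (t : ℝ) : ℕ :=
  {j : Fin n | gap n z j ≤ t}.ncard

/-- Normalised partition function `Z_n(β)`. -/
noncomputable def Zfun (n : ℕ) (z : Fin n → ℝ) (β : ℝ) : ℝ :=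
  ∑ j : Fin n, Real.exp (-(β * gap n z j))

/-- Softmax probabilities `p_{n,j}(β)`. -/
noncomputable def softmaxP (n : ℕ) (z : Fin n → ℝ) (β : ℝ) (j : Fin n) : ℝ :=
  Real.exp (β * z j) / ∑ ℓ : Fin n, Real.exp (β * z ℓ)

/-- Shannon entropy `H_n(β)`. -/
noncomputable def entropyH (n : ℕ) (z : Fin n → ℝ) (β : ℝ) : ℝ :=
  -∑ j : Fin n, softmaxP n z β j * Real.log (softmaxP n z β j)

/-- The set of values `log N_n(t) / t` over `t > 0`, whose supremum is `Λ_n`. -/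
def lamSet (n : ℕ) (z : Fin n → ℝ) : Set ℝ :=
  {r | ∃ t : ℝ, 0 < t ∧ r = Real.log (Ncount n z t) / t}

/-- Second-largest entry of a finite vector (equals the largest in case of ties). -/
noncomputable def secondLargest (n : ℕ) (v : Fin n → ℝ) : ℝ :=
  sInf (Set.range fun i => sSup (v '' {j | j ≠ i}))

/-- Top-two weight gap `D_n(β)`. -/
noncomputable def Dgap (n : ℕ) (z : Fin n → ℝ) (β : ℝ) : ℝ :=
  sSup (Set.range (softmaxP n z β)) - secondLargest n (softmaxP n z β)

/-- Rank gap `G_n(β) = max_{i,j} |p_{n,i}(β) - p_{n,j}(β)|`. -/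
noncomputable def Ggap (n : ℕ) (z : Fin n → ℝ) (β : ℝ) : ℝ :=
  sSup {x | ∃ i j : Fin n, x = |softmaxP n z β i - softmaxP n z β j|}

/-- Resolved accumulation scale `Λ_n^{(r)}` (with `sup ∅ = 0`), valued in `ℝ≥0∞`. -/
noncomputable def resolvedLam (n : ℕ) (z : Fin n → ℝ) (r : ℝ) : ℝ≥0∞ :=
  ⨆ t ∈ {t : ℝ | 0 < t ∧ r < Real.log (Ncount n z t)},
    ENNReal.ofReal ((Real.log (Ncount n z t) - r) / t)

/-- Laplace envelope `S_n(β) = sup_{t ≥ 0} (log N_n(t) - β t)`. -/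
noncomputable def Sfun (n : ℕ) (z : Fin n → ℝ) (β : ℝ) : ℝ :=
  sSup {x | ∃ t : ℝ, 0 ≤ t ∧ x = Real.log (Ncount n z t) - β * t}

/-- Rank boundary `B_n^rank(r) = sup {β ≥ 0 : log Z_n(β) ≥ r}`, valued in `ℝ≥0∞`. -/
noncomputable def rankBoundary (n : ℕ) (z : Fin n → ℝ) (r : ℝ) : ℝ≥0∞ :=
  ⨆ β ∈ {β : ℝ | 0 ≤ β ∧ r ≤ Real.log (Zfun n z β)}, ENNReal.ofReal β

/-- `X_n ≍ (log n)^ξ`. -/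
def IsLogAsymp (X : ℕ → ℝ) (ξ : ℝ) : Prop :=
  ∃ c₁ c₂ : ℝ, 0 < c₁ ∧ c₁ ≤ c₂ ∧
    ∀ᶠ n : ℕ in Filter.atTop,
      c₁ * Real.log n ^ ξ ≤ X n ∧ X n ≤ c₂ * Real.log n ^ ξ

/-!
Since `Λ_n` bounds `log N_n(t) / t`, we have `N_n(t) ≤ e^{Λ_n t}`, so the `k`-th smallest gap is
at least `log (k + 1) / Λ_n`; with `r = β / Λ_n` this gives
`Z_n(β) ≤ ∑ k, (k + 1)^{-r} ≤ 1 + 2^{2-r}`, and through `H = β⟨g⟩ + log Z` it forces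
`H_n(β) → 0` once `r → ∞`. Conversely, `Λ_n` is a supremum, so some `t` has
`log N_n(t) > Λ_n t / 2`. The at least two scores within `t` of the top carry weight
`≥ e^{-βt} / Z_n(β)`, while no weight exceeds `1 / Z_n(β)`, so `D_n(β) ≤ βt e^{βt} / N_n(t) ≤ 2r`,
which tends to `0` once `r → 0`. As `β_n / Λ_n ≍ (log n)^{ξ_β - ξ_Λ}`, the sign of `ξ_β - ξ_Λ`
decides which collapse occurs.
-/

open Real Finset Topology

section Gaps

variable {n : ℕ} {z : Fin n → ℝ}

lemma le_zmax (j : Fin n) : z j ≤ zmax n z :=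
  le_csSup (Set.finite_range z).bddAbove ⟨j, rfl⟩

lemma gap_nonneg (j : Fin n) : 0 ≤ gap n z j := sub_nonneg.2 (le_zmax j)

lemma exists_gap_eq_zero (hn : 0 < n) : ∃ j, gap n z j = 0 := by
  have : Nonempty (Fin n) := ⟨⟨0, hn⟩⟩
  obtain ⟨j, hj⟩ := (Set.range_nonempty z).csSup_mem (Set.finite_range z)
  exact ⟨j, by rw [gap, zmax, ← hj, sub_self]⟩

lemma Ncount_mono : Monotone (Ncount n z) := fun _ _ hst =>
  Set.ncard_le_ncard (fun _ hj => le_trans hj hst) (Set.toFinite _)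

/-- `lamSet` only constrains `t > 0`; the case `t = 0` comes from letting `s ↓ t`. -/
lemma Ncount_le_exp {Λ t : ℝ} (hΛ : Λ ∈ upperBounds (lamSet n z)) (ht : 0 ≤ t) :
    (Ncount n z t : ℝ) ≤ exp (Λ * t) := by
  have hcont : Tendsto (fun s => exp (Λ * s)) (𝓝[>] t) (𝓝 (exp (Λ * t))) :=
    ((continuous_const.mul continuous_id).rexp.tendsto t).mono_left nhdsWithin_le_nhds
  refine ge_of_tendsto hcont (eventually_nhdsWithin_of_forall fun s (hs : t < s) => ?_)
  have hs0 : 0 < s := ht.trans_lt hs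
  calc (Ncount n z t : ℝ) ≤ Ncount n z s := by exact_mod_cast Ncount_mono hs.le
    _ ≤ exp (Λ * s) := by
      rcases (Nat.cast_nonneg (α := ℝ) (Ncount n z s)).eq_or_lt with h0 | hpos
      · rw [← h0]; exact (exp_pos _).le
      · rw [← log_le_iff_le_exp hpos, ← div_le_iff₀ hs0]
        exact hΛ ⟨s, hs0, rfl⟩

end Gaps

lemma succ_le_ncard_le_sort {α : Type*} [LinearOrder α] {n : ℕ} (g : Fin n → α) (k : Fin n) :
    (k : ℕ) + 1 ≤ {j | g j ≤ g (Tuple.sort g k)}.ncard := by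
  classical
  have hsub : ((Iic k).image (Tuple.sort g) : Set (Fin n)) ⊆ {j | g j ≤ g (Tuple.sort g k)} := by
    intro j hj
    obtain ⟨i, hi, rfl⟩ := mem_image.1 hj
    exact Tuple.monotone_sort g (mem_Iic.1 hi)
  calc (k : ℕ) + 1 = ((Iic k).image (Tuple.sort g)).card := by
        rw [card_image_of_injective _ (Tuple.sort g).injective, Fin.card_Iic]
    _ ≤ _ := by rw [← Set.ncard_coe_finset]; exact Set.ncard_le_ncard hsub (Set.toFinite _)

lemma rpow_neg_le_two_rpow_mul_sub {s : ℝ} (hs : 2 ≤ s) (i : ℕ) :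
    ((i : ℝ) + 2) ^ (-s) ≤ 2 ^ (2 - s) * (1 / ((i : ℝ) + 1) - 1 / ((i : ℝ) + 2)) := by
  have hi2 : (0 : ℝ) < i + 2 := by positivity
  have hsq : ((i : ℝ) + 2) ^ (-2 : ℝ) ≤ 1 / ((i : ℝ) + 1) - 1 / ((i : ℝ) + 2) := by
    rw [rpow_neg hi2.le, rpow_two, div_sub_div _ _ (by positivity) hi2.ne']
    rw [inv_eq_one_div, div_le_div_iff₀ (by positivity) (by positivity)]
    nlinarith
  calc ((i : ℝ) + 2) ^ (-s) = ((i : ℝ) + 2) ^ (2 - s) * ((i : ℝ) + 2) ^ (-2 : ℝ) := by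
        rw [← rpow_add hi2]; ring_nf
    _ ≤ 2 ^ (2 - s) * (1 / ((i : ℝ) + 1) - 1 / ((i : ℝ) + 2)) := by
        refine mul_le_mul ?_ hsq (by positivity) (by positivity)
        exact rpow_le_rpow_of_nonpos two_pos (by linarith [i.cast_nonneg (α := ℝ)]) (by linarith)

lemma sum_range_rpow_neg_le {s : ℝ} (hs : 2 ≤ s) (m : ℕ) :
    ∑ i ∈ range m, ((i : ℝ) + 1) ^ (-s) ≤ 1 + 2 ^ (2 - s) := by
  have h2s : (0 : ℝ) < 2 ^ (2 - s) := by positivity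
  rcases m with _ | m
  · simp only [range_zero, sum_empty]; linarith
  rw [sum_range_succ', Nat.cast_zero, zero_add, one_rpow, add_comm (1 : ℝ)]
  gcongr
  calc ∑ i ∈ range m, ((((i + 1 : ℕ) : ℝ)) + 1) ^ (-s)
      ≤ ∑ i ∈ range m, 2 ^ (2 - s) * (1 / ((i : ℝ) + 1) - 1 / (((i + 1 : ℕ) : ℝ) + 1)) := by
        gcongr with i
        push_cast
        rw [add_assoc, one_add_one_eq_two]
        exact rpow_neg_le_two_rpow_mul_sub hs i
    _ = 2 ^ (2 - s) * (1 - 1 / ((m : ℝ) + 1)) := by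
        rw [← mul_sum, sum_range_sub' (fun i : ℕ => 1 / ((i : ℝ) + 1))]
        simp
    _ ≤ 2 ^ (2 - s) := mul_le_of_le_one_right h2s.le (by simp; positivity)

section PartitionFunction

variable {n : ℕ} {z : Fin n → ℝ}

lemma one_le_Zfun (hn : 0 < n) (β : ℝ) : 1 ≤ Zfun n z β := by
  obtain ⟨j, hj⟩ := exists_gap_eq_zero (z := z) hn
  calc (1 : ℝ) = exp (-(β * gap n z j)) := by rw [hj, mul_zero, neg_zero, exp_zero]
    _ ≤ Zfun n z β :=
      single_le_sum (f := fun i => exp (-(β * gap n z i))) (fun i _ => (exp_pos _).le) (mem_univ j)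

lemma Zfun_anti {β₁ β₂ : ℝ} (hβ : β₁ ≤ β₂) : Zfun n z β₂ ≤ Zfun n z β₁ :=
  sum_le_sum fun j _ => exp_le_exp.2 <| neg_le_neg <|
    mul_le_mul_of_nonneg_right hβ (gap_nonneg j)

lemma Ncount_mul_exp_le_Zfun {β t : ℝ} (hβ : 0 ≤ β) :
    (Ncount n z t : ℝ) * exp (-(β * t)) ≤ Zfun n z β := by
  classical
  rw [Ncount, Set.ncard_eq_toFinset_card', ← nsmul_eq_mul]
  refine (card_nsmul_le_sum _ _ _ fun j hj => ?_).trans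
    (sum_le_sum_of_subset_of_nonneg (subset_univ _) fun j _ _ => (exp_pos _).le)
  rw [Set.mem_toFinset] at hj
  exact exp_le_exp.2 (neg_le_neg (mul_le_mul_of_nonneg_left hj hβ))

variable {Λ : ℝ}

lemma exp_neg_mul_gap_sort_le (hΛ0 : 0 < Λ) (hΛ : Λ ∈ upperBounds (lamSet n z)) {b : ℝ}
    (hb : 0 ≤ b) (k : Fin n) :
    exp (-(b * gap n z (Tuple.sort (gap n z) k))) ≤ ((k : ℝ) + 1) ^ (-(b / Λ)) := by
  set g := gap n z (Tuple.sort (gap n z) k)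
  have hk : ((k : ℝ) + 1) ≤ exp (Λ * g) :=
    calc ((k : ℝ) + 1) ≤ Ncount n z g := by exact_mod_cast succ_le_ncard_le_sort (gap n z) k
      _ ≤ exp (Λ * g) := Ncount_le_exp hΛ (gap_nonneg _)
  have hlog : log ((k : ℝ) + 1) ≤ Λ * g := (log_le_iff_le_exp (by positivity)).2 hk
  rw [rpow_def_of_pos (by positivity), exp_le_exp]
  have := mul_le_mul_of_nonneg_left hlog (div_nonneg hb hΛ0.le)
  have hcancel : b / Λ * (Λ * g) = b * g := by field_simp
  linarith

lemma Zfun_le_sum_range_rpow (hΛ0 : 0 < Λ) (hΛ : Λ ∈ upperBounds (lamSet n z)) {b : ℝ}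
    (hb : 0 ≤ b) : Zfun n z b ≤ ∑ i ∈ range n, ((i : ℝ) + 1) ^ (-(b / Λ)) := by
  rw [Zfun, ← Equiv.sum_comp (Tuple.sort (gap n z)),
    ← Fin.sum_univ_eq_sum_range (fun i => ((i : ℝ) + 1) ^ (-(b / Λ)))]
  exact sum_le_sum fun k _ => exp_neg_mul_gap_sort_le hΛ0 hΛ hb k

lemma Zfun_sub_one_le (hΛ0 : 0 < Λ) (hΛ : Λ ∈ upperBounds (lamSet n z)) {b : ℝ}
    (hb : 2 ≤ b / Λ) : Zfun n z b - 1 ≤ 2 ^ (2 - b / Λ) := by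
  have hb0 : 0 ≤ b := by linarith [(le_div_iff₀ hΛ0).1 hb]
  linarith [Zfun_le_sum_range_rpow hΛ0 hΛ hb0, sum_range_rpow_neg_le hb n]

end PartitionFunction

lemma mul_exp_neg_half_le_one (x : ℝ) : x * exp (-(x / 2)) ≤ 1 := by
  have h := mul_exp_neg_le_exp_neg_one (x / 2)
  have he : 2 * exp (-1) ≤ 1 := by
    rw [exp_neg, ← div_eq_mul_inv, div_le_one (exp_pos 1)]
    linarith [add_one_le_exp 1]
  linarith

section Softmax

variable {n : ℕ} {z : Fin n → ℝ} {β : ℝ}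

lemma softmaxP_eq (j : Fin n) : softmaxP n z β j = exp (-(β * gap n z j)) / Zfun n z β := by
  have hshift : ∀ ℓ, exp (-(β * gap n z ℓ)) = exp (-(β * zmax n z)) * exp (β * z ℓ) := by
    intro ℓ
    rw [← exp_add, gap]
    ring_nf
  simp only [softmaxP, Zfun, hshift, ← mul_sum]
  rw [mul_div_mul_left _ _ (exp_ne_zero _)]

lemma softmaxP_nonneg (j : Fin n) : 0 ≤ softmaxP n z β j := by
  rw [softmaxP_eq]
  exact div_nonneg (exp_pos _).le (sum_nonneg fun _ _ => (exp_pos _).le)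

lemma softmaxP_le_one (j : Fin n) : softmaxP n z β j ≤ 1 := by
  rw [softmaxP_eq, div_le_one (zero_lt_one.trans_le (one_le_Zfun (Fin.pos j) β))]
  exact single_le_sum (f := fun i => exp (-(β * gap n z i))) (fun i _ => (exp_pos _).le)
    (mem_univ j)

lemma softmaxP_le_inv_Zfun (hβ : 0 ≤ β) (j : Fin n) : softmaxP n z β j ≤ 1 / Zfun n z β := by
  rw [softmaxP_eq]
  gcongr
  · exact sum_nonneg fun _ _ => (exp_pos _).le
  · exact exp_le_one_iff.2 (neg_nonpos.2 (mul_nonneg hβ (gap_nonneg j)))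

lemma entropyH_nonneg : 0 ≤ entropyH n z β := by
  rw [entropyH, ← sum_neg_distrib]
  exact sum_nonneg fun j _ => by
    simpa only [negMulLog, neg_mul] using negMulLog_nonneg (softmaxP_nonneg j) (softmaxP_le_one j)

lemma entropyH_eq (hn : 0 < n) :
    entropyH n z β =
      (∑ j, β * gap n z j * exp (-(β * gap n z j))) / Zfun n z β + log (Zfun n z β) := by
  have hZ : 0 < Zfun n z β := zero_lt_one.trans_le (one_le_Zfun hn β)
  have hterm : ∀ j, softmaxP n z β j * log (softmaxP n z β j) =
      -(β * gap n z j * exp (-(β * gap n z j)) / Zfun n z β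
        + log (Zfun n z β) * (exp (-(β * gap n z j)) / Zfun n z β)) := by
    intro j
    rw [softmaxP_eq, log_div (exp_ne_zero _) hZ.ne', log_exp]
    ring
  have hsum : ∑ j, exp (-(β * gap n z j)) = Zfun n z β := rfl
  rw [entropyH, sum_congr rfl fun j _ => hterm j, sum_neg_distrib, neg_neg, sum_add_distrib,
    ← sum_div, ← mul_sum, ← sum_div, hsum, div_self hZ.ne', mul_one]

lemma sum_mul_gap_mul_exp_le (hn : 0 < n) :
    ∑ j, β * gap n z j * exp (-(β * gap n z j)) ≤ Zfun n z (β / 2) - 1 := by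
  obtain ⟨j₀, hj₀⟩ := exists_gap_eq_zero (z := z) hn
  -- a maximiser contributes `0` on the left and `1` to `Zfun`
  rw [Zfun, ← add_sum_erase _ _ (mem_univ j₀), ← add_sum_erase _ _ (mem_univ j₀), hj₀]
  simp only [mul_zero, zero_mul, neg_zero, exp_zero, zero_add, add_sub_cancel_left]
  refine sum_le_sum fun j _ => ?_
  have hsplit : exp (-(β * gap n z j)) =
      exp (-(β * gap n z j / 2)) * exp (-(β / 2 * gap n z j)) := by
    rw [← exp_add]; ring_nf
  rw [hsplit, ← mul_assoc]
  exact mul_le_of_le_one_left (exp_pos _).le (mul_exp_neg_half_le_one _)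

lemma entropyH_le (hn : 0 < n) {Λ : ℝ} (hΛ0 : 0 < Λ) (hΛ : Λ ∈ upperBounds (lamSet n z))
    (hβ : 4 ≤ β / Λ) : entropyH n z β ≤ 2 * 2 ^ (2 - β / Λ / 2) := by
  have hβ0 : 0 ≤ β := by linarith [(le_div_iff₀ hΛ0).1 hβ]
  have hZ : 1 ≤ Zfun n z β := one_le_Zfun hn β
  have hW0 : 0 ≤ ∑ j, β * gap n z j * exp (-(β * gap n z j)) :=
    sum_nonneg fun j _ => mul_nonneg (mul_nonneg hβ0 (gap_nonneg j)) (exp_pos _).le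
  have hhalf : Zfun n z (β / 2) - 1 ≤ 2 ^ (2 - β / Λ / 2) := by
    rw [div_right_comm]
    exact Zfun_sub_one_le hΛ0 hΛ (by rw [div_right_comm]; linarith)
  rw [entropyH_eq hn]
  linarith [div_le_self hW0 hZ, log_le_sub_one_of_pos (zero_lt_one.trans_le hZ),
    sum_mul_gap_mul_exp_le (z := z) (β := β) hn, Zfun_anti (z := z) (by linarith : β / 2 ≤ β)]

end Softmax

lemma le_secondLargest {n : ℕ} {v : Fin n → ℝ} {m : ℝ} {i j : Fin n} (hij : i ≠ j)
    (hi : m ≤ v i) (hj : m ≤ v j) : m ≤ secondLargest n v := by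
  have : Nonempty (Fin n) := ⟨i⟩
  refine le_csInf (Set.range_nonempty _) ?_
  rintro _ ⟨k, rfl⟩
  obtain ⟨l, hlk, hl⟩ : ∃ l, l ≠ k ∧ m ≤ v l := by
    by_cases hik : i = k
    · exact ⟨j, hik ▸ hij.symm, hj⟩
    · exact ⟨i, hik, hi⟩
  exact hl.trans (le_csSup ((Set.toFinite _).image v).bddAbove ⟨l, hlk, rfl⟩)

lemma secondLargest_le_sSup {n : ℕ} (hn : 2 ≤ n) (v : Fin n → ℝ) :
    secondLargest n v ≤ sSup (Set.range v) := by
  let i₀ : Fin n := ⟨0, by omega⟩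
  let i₁ : Fin n := ⟨1, by omega⟩
  refine (csInf_le (Set.finite_range _).bddBelow ⟨i₀, rfl⟩).trans ?_
  exact csSup_le_csSup (Set.finite_range v).bddAbove ⟨v i₁, i₁, by simp [i₀, i₁], rfl⟩
    (Set.image_subset_range v _)

section TopTwoGap

variable {n : ℕ} {z : Fin n → ℝ} {β : ℝ}

lemma Dgap_nonneg (hn : 2 ≤ n) : 0 ≤ Dgap n z β :=
  sub_nonneg.2 (secondLargest_le_sSup hn _)

lemma Dgap_le_of_two_le_Ncount (hβ : 0 ≤ β) {t : ℝ} (hN : 2 ≤ Ncount n z t) :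
    Dgap n z β ≤ β * t * exp (β * t) / Ncount n z t := by
  obtain ⟨j₁, j₂, hj₁, hj₂, hne⟩ := (Set.one_lt_ncard_iff (Set.toFinite _)).1 hN
  have ht : 0 ≤ t := (gap_nonneg j₁).trans hj₁
  have : Nonempty (Fin n) := ⟨j₁⟩
  have hNpos : (0 : ℝ) < Ncount n z t := by exact_mod_cast zero_lt_two.trans_le hN
  have hZ : (Ncount n z t : ℝ) * exp (-(β * t)) ≤ Zfun n z β := Ncount_mul_exp_le_Zfun hβ
  have hZpos : 0 < Zfun n z β := (mul_pos hNpos (exp_pos _)).trans_le hZ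
  have hlarge {j} (hj : gap n z j ≤ t) : exp (-(β * t)) / Zfun n z β ≤ softmaxP n z β j := by
    rw [softmaxP_eq]
    gcongr
  have hmax : sSup (Set.range (softmaxP n z β)) ≤ 1 / Zfun n z β :=
    csSup_le (Set.range_nonempty _) (Set.forall_mem_range.2 (softmaxP_le_inv_Zfun hβ))
  have hsecond := le_secondLargest hne (hlarge hj₁) (hlarge hj₂)
  calc Dgap n z β ≤ (1 - exp (-(β * t))) / Zfun n z β := by
        rw [Dgap, sub_div]; exact sub_le_sub hmax hsecond
    _ ≤ β * t / (Ncount n z t * exp (-(β * t))) := by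
        gcongr
        linarith [add_one_le_exp (-(β * t))]
    _ = β * t * exp (β * t) / Ncount n z t := by
        rw [exp_neg]; field_simp

lemma Dgap_le {Λ : ℝ} (hΛ0 : 0 < Λ) (hΛ : IsLUB (lamSet n z) Λ) (hβ : 0 ≤ β)
    (hr : β / Λ ≤ 1 / 4) : Dgap n z β ≤ 2 * (β / Λ) := by
  obtain ⟨_, ⟨t, ht, rfl⟩, hlt⟩ := (lt_isLUB_iff hΛ).1 (half_lt_self hΛ0)
  set L := log (Ncount n z t)
  have hL : Λ / 2 * t < L := (lt_div_iff₀ ht).1 hlt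
  have hLpos : 0 < L := lt_trans (by positivity) hL
  have hN : 2 ≤ Ncount n z t := by
    by_contra! h
    have : (Ncount n z t : ℝ) ≤ 1 := by exact_mod_cast Nat.lt_succ_iff.1 h
    linarith [log_nonpos (Nat.cast_nonneg _) this]
  have hβt : β * t ≤ 2 * (β / Λ) * L := by
    have : β * t = 2 * (β / Λ) * (Λ / 2 * t) := by field_simp
    rw [this]; gcongr
  calc Dgap n z β ≤ β * t * exp (β * t) / Ncount n z t := Dgap_le_of_two_le_Ncount hβ hN
    _ ≤ 2 * (β / Λ) * L * exp (L / 2) / exp L := by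
        rw [← exp_log (show (0 : ℝ) < Ncount n z t by positivity)]
        gcongr
        nlinarith
    _ = 2 * (β / Λ) * (L * exp (-(L / 2))) := by
        rw [mul_div_assoc, ← exp_sub]; ring_nf
    _ ≤ 2 * (β / Λ) := mul_le_of_le_one_right (by positivity) (mul_exp_neg_half_le_one L)

end TopTwoGap

lemma tendsto_log_natCast_atTop : Tendsto (fun n : ℕ => log n) atTop atTop :=
  tendsto_log_atTop.comp tendsto_natCast_atTop_atTop

namespace IsLogAsymp

variable {X Y : ℕ → ℝ} {a b : ℝ}

lemma eventually_pos (hX : IsLogAsymp X a) : ∀ᶠ n in atTop, 0 < X n := by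
  obtain ⟨c₁, _, hc₁, _, hX⟩ := hX
  filter_upwards [hX, eventually_gt_atTop 1] with n hXn hn
  exact (mul_pos hc₁ (rpow_pos_of_pos (log_pos (by exact_mod_cast hn)) a)).trans_le hXn.1

lemma div (hX : IsLogAsymp X a) (hY : IsLogAsymp Y b) :
    IsLogAsymp (fun n => X n / Y n) (a - b) := by
  have hXpos := hX.eventually_pos
  have hYpos := hY.eventually_pos
  obtain ⟨c₁, c₂, hc₁, hc₁₂, hX⟩ := hX
  obtain ⟨d₁, d₂, hd₁, hd₁₂, hY⟩ := hY
  have hd₂ : 0 < d₂ := hd₁.trans_le hd₁₂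
  refine ⟨c₁ / d₂, c₂ / d₁, by positivity, div_le_div₀ (by linarith) hc₁₂ hd₁ hd₁₂, ?_⟩
  filter_upwards [hX, hY, hXpos, hYpos, eventually_gt_atTop 1] with n hXn hYn hXn0 hYn0 hn
  have hlog : 0 < log n := log_pos (by exact_mod_cast hn)
  constructor
  · calc c₁ / d₂ * log n ^ (a - b) = c₁ * log n ^ a / (d₂ * log n ^ b) := by
          rw [rpow_sub hlog]; ring
      _ ≤ X n / Y n := div_le_div₀ hXn0.le hXn.1 hYn0 hYn.2
  · calc X n / Y n ≤ c₂ * log n ^ a / (d₁ * log n ^ b) :=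
          div_le_div₀ (by linarith) hXn.2 (by positivity) hYn.1
      _ = c₂ / d₁ * log n ^ (a - b) := by rw [rpow_sub hlog]; ring

lemma tendsto_zero_of_neg (hX : IsLogAsymp X a) (ha : a < 0) :
    Tendsto X atTop (𝓝 0) := by
  have hXpos := hX.eventually_pos
  obtain ⟨_, c₂, _, _, hX⟩ := hX
  have hpow : Tendsto (fun n : ℕ => log n ^ a) atTop (𝓝 0) := by
    simpa [Function.comp_def] using
      (tendsto_rpow_neg_atTop (neg_pos.2 ha)).comp tendsto_log_natCast_atTop
  refine squeeze_zero' (hXpos.mono fun n h => h.le) (hX.mono fun n h => h.2) ?_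
  simpa using hpow.const_mul c₂

lemma tendsto_atTop_of_pos (hX : IsLogAsymp X a) (ha : 0 < a) : Tendsto X atTop atTop := by
  obtain ⟨c₁, _, hc₁, _, hX⟩ := hX
  exact tendsto_atTop_mono' _ (hX.mono fun n h => h.1)
    (((tendsto_rpow_atTop ha).comp tendsto_log_natCast_atTop).const_mul_atTop hc₁)

end IsLogAsymp

lemma tendsto_two_rpow_two_sub : Tendsto (fun s : ℝ => (2 : ℝ) ^ (2 - s)) atTop (𝓝 0) := by
  simpa [Function.comp_def, ← sub_eq_add_neg] using
    (tendsto_rpow_atBot_of_base_gt_one 2 one_lt_two).comp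
      (tendsto_atBot_add_const_left _ 2 tendsto_neg_atTop_atBot)

theorem stmt11_general (z : (n : ℕ) → Fin n → ℝ) (Λ β : ℕ → ℝ) (ξΛ ξβ : ℝ)
    (hΛ : ∀ᶠ n in atTop, IsLUB (lamSet n (z n)) (Λ n))
    (hΛa : IsLogAsymp Λ ξΛ) (hβa : IsLogAsymp β ξβ) :
    (ξβ < ξΛ → Tendsto (fun n => Dgap n (z n) (β n)) atTop (nhds 0)) ∧
    (ξΛ < ξβ → Tendsto (fun n => entropyH n (z n) (β n)) atTop (nhds 0)) ∧
    (¬ Tendsto (fun n => Dgap n (z n) (β n)) atTop (nhds 0) →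
      ¬ Tendsto (fun n => entropyH n (z n) (β n)) atTop (nhds 0) → ξβ = ξΛ) := by
  have hratio := hβa.div hΛa
  have hpos := hΛ.and (hΛa.eventually_pos.and hβa.eventually_pos)
  have hD (h : ξβ < ξΛ) : Tendsto (fun n => Dgap n (z n) (β n)) atTop (𝓝 0) := by
    have hr := hratio.tendsto_zero_of_neg (sub_neg.2 h)
    refine squeeze_zero' ?_ ?_ (by simpa using hr.const_mul 2)
    · filter_upwards [eventually_ge_atTop 2] with n hn using Dgap_nonneg hn
    · filter_upwards [hpos, hr.eventually (ge_mem_nhds (by norm_num : (0 : ℝ) < 1 / 4))]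
        with n hn hrn using Dgap_le hn.2.1 hn.1 hn.2.2.le hrn
  have hH (h : ξΛ < ξβ) : Tendsto (fun n => entropyH n (z n) (β n)) atTop (𝓝 0) := by
    have hr := hratio.tendsto_atTop_of_pos (sub_pos.2 h)
    refine squeeze_zero' (.of_forall fun n => entropyH_nonneg) ?_
      (by simpa using (tendsto_two_rpow_two_sub.comp (hr.atTop_div_const two_pos)).const_mul 2)
    filter_upwards [hpos, hr.eventually_ge_atTop 4, eventually_gt_atTop 0]
      with n hn hrn hn0 using entropyH_le hn0 hn.2.1 hn.1.1 hrn
  refine ⟨hD, hH, fun hnD hnH => ?_⟩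
  rcases lt_trichotomy ξβ ξΛ with h | h | h
  · exact absurd (hD h) hnD
  · exact h
  · exact absurd (hH h) hnH

theorem stmt11 (z : (n : ℕ) → Fin n → ℝ) (Λ β : ℕ → ℝ) (ξΛ ξβ : ℝ)
    (hβ : ∀ n, 0 < β n)
    (hΛ : ∀ᶠ n in atTop, IsLUB (lamSet n (z n)) (Λ n))
    (hΛa : IsLogAsymp Λ ξΛ) (hβa : IsLogAsymp β ξβ) :
    (ξβ < ξΛ → Tendsto (fun n => Dgap n (z n) (β n)) atTop (nhds 0)) ∧
    (ξΛ < ξβ → Tendsto (fun n => entropyH n (z n) (β n)) atTop (nhds 0)) ∧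
    (¬ Tendsto (fun n => Dgap n (z n) (β n)) atTop (nhds 0) →
      ¬ Tendsto (fun n => entropyH n (z n) (β n)) atTop (nhds 0) → ξβ = ξΛ) :=
  stmt11_general z Λ β ξΛ ξβ hΛ hΛa hβa
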